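/- Let y : [0, ∞) → ℝ be continuous and nonnegative, let g : [0, ∞) → ℝ be nonnegative and locally integrable, and let K ≥ 0 and C ≥ 0 be constants. Assume: (i) the energy inequality y(τ) + ∫_ξ^τ g(s) ds ≤ y(ξ) + K holds for all 0 ≤ ξ ≤ τ with τ − ξ ≤ 1; and (ii) the Poincaré-type inequality ∫_t^{t+1} y(s) ds ≤ C ∫_t^{t+1} g(s) ds holds for all t ≥ 0. Then y is uniformly bounded in time: y(t) ≤ y(0) + (3 + C) K for all t ≥ 0. -/

import Mathlib

open MeasureTheory Filter

/-! On a window `(t - 1, t]` with dissipation `G = ∫ g`, the Poincaré inequality gives a time `ξ`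
with `y ξ ≤ C G`, so the energy inequality from `ξ` yields `y t ≤ C G + K`, while the energy
inequality from `t - 1` yields `G ≤ y (t - 1) + K - y t`. Hence
`(1 + C) y t ≤ C y (t - 1) + (1 + C) K`, a recursion that preserves the bound
`y t ≤ y 0 + (1 + C) K` because `y 0 ≥ 0`; on `[0, 1]` that bound is the energy inequality itself. -/

theorem exists_mem_Ioc_mul_le_setIntegral {f : ℝ → ℝ} {a b : ℝ} (hab : a < b)
    (hf : ContinuousOn f (Set.Icc a b)) :
    ∃ ξ ∈ Set.Ioc a b, (b - a) * f ξ ≤ ∫ s in Set.Ioc a b, f s := by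
  have hvol : volume.real (Set.Ioc a b) = b - a := by simp [hab.le]
  obtain ⟨ξ, hξ, hle⟩ := exists_le_setAverage (μ := volume)
    (by simpa using hab) (by simp) ((hf.integrableOn_Icc).mono_set Set.Ioc_subset_Icc_self)
  refine ⟨ξ, hξ, ?_⟩
  rw [setAverage_eq, hvol, smul_eq_mul] at hle
  rwa [le_inv_mul_iff₀ (sub_pos.2 hab)] at hle

theorem forall_nonneg_of_Icc_zero_one_of_sub_one {P : ℝ → Prop}
    (hbase : ∀ t ∈ Set.Icc (0 : ℝ) 1, P t) (hstep : ∀ t ≥ (1 : ℝ), P (t - 1) → P t) :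
    ∀ t ≥ (0 : ℝ), P t := by
  suffices ∀ n : ℕ, ∀ t ∈ Set.Icc (0 : ℝ) (n + 1), P t from
    fun t ht => this ⌈t⌉₊ t ⟨ht, (Nat.le_ceil t).trans (le_add_of_nonneg_right zero_le_one)⟩
  intro n
  induction n with
  | zero => simpa using hbase
  | succ n ih =>
    intro t ⟨ht0, htn⟩
    rcases le_or_gt t 1 with ht1 | ht1
    · exact hbase t ⟨ht0, ht1⟩
    · refine hstep t ht1.le (ih (t - 1) ⟨by linarith, ?_⟩)
      push_cast at htn
      linarith

section EnergyEstimate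

variable {y g : ℝ → ℝ} {K C : ℝ}

theorem le_add_of_energy_inequality (hg_nonneg : ∀ t ≥ (0 : ℝ), 0 ≤ g t)
    (henergy : ∀ ξ τ : ℝ, 0 ≤ ξ → ξ ≤ τ → τ - ξ ≤ 1 →
      y τ + ∫ s in Set.Ioc ξ τ, g s ≤ y ξ + K)
    {ξ τ : ℝ} (hξ : 0 ≤ ξ) (hξτ : ξ ≤ τ) (hτξ : τ - ξ ≤ 1) : y τ ≤ y ξ + K := by
  have hg : 0 ≤ ∫ s in Set.Ioc ξ τ, g s :=
    setIntegral_nonneg measurableSet_Ioc fun s hs => hg_nonneg s (hξ.trans hs.1.le)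
  linarith [henergy ξ τ hξ hξτ hτξ]

theorem one_add_mul_le_of_energy_poincare (hy_cont : ContinuousOn y (Set.Ici 0))
    (hg_nonneg : ∀ t ≥ (0 : ℝ), 0 ≤ g t)
    (henergy : ∀ ξ τ : ℝ, 0 ≤ ξ → ξ ≤ τ → τ - ξ ≤ 1 →
      y τ + ∫ s in Set.Ioc ξ τ, g s ≤ y ξ + K)
    (hpoincare : ∀ t ≥ (0 : ℝ),
      ∫ s in Set.Ioc t (t + 1), y s ≤ C * ∫ s in Set.Ioc t (t + 1), g s)
    (hC : 0 ≤ C) {t : ℝ} (ht : 1 ≤ t) :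
    (1 + C) * y t ≤ C * y (t - 1) + (1 + C) * K := by
  have ht0 : 0 ≤ t - 1 := by linarith
  obtain ⟨ξ, hξ, hyξ⟩ := exists_mem_Ioc_mul_le_setIntegral (f := y) (sub_one_lt t)
    (hy_cont.mono fun s hs => ht0.trans hs.1)
  have hpoin := hpoincare (t - 1) ht0
  rw [sub_add_cancel] at hpoin
  rw [sub_sub_cancel, one_mul] at hyξ
  have hyt : y t ≤ y ξ + K :=
    le_add_of_energy_inequality hg_nonneg henergy (ht0.trans hξ.1.le) hξ.2 (by linarith [hξ.1])
  have hG := henergy (t - 1) t ht0 (by linarith) (by linarith)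
  nlinarith [mul_le_mul_of_nonneg_left hG hC]

theorem le_add_one_add_mul_of_energy_poincare (hK : 0 ≤ K) (hC : 0 ≤ C)
    (hy_cont : ContinuousOn y (Set.Ici 0)) (hy₀ : 0 ≤ y 0)
    (hg_nonneg : ∀ t ≥ (0 : ℝ), 0 ≤ g t)
    (henergy : ∀ ξ τ : ℝ, 0 ≤ ξ → ξ ≤ τ → τ - ξ ≤ 1 →
      y τ + ∫ s in Set.Ioc ξ τ, g s ≤ y ξ + K)
    (hpoincare : ∀ t ≥ (0 : ℝ),
      ∫ s in Set.Ioc t (t + 1), y s ≤ C * ∫ s in Set.Ioc t (t + 1), g s) :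
    ∀ t ≥ (0 : ℝ), y t ≤ y 0 + (1 + C) * K := by
  refine forall_nonneg_of_Icc_zero_one_of_sub_one (fun t ht => ?_) (fun t ht hprev => ?_)
  · have := le_add_of_energy_inequality hg_nonneg henergy le_rfl ht.1 (by linarith [ht.2])
    nlinarith
  · have hstep := one_add_mul_le_of_energy_poincare hy_cont hg_nonneg henergy hpoincare hC ht
    nlinarith [mul_le_mul_of_nonneg_left hprev hC]

end EnergyEstimate

theorem uniform_energy_bound_general (y g : ℝ → ℝ) (K C : ℝ) (hK : 0 ≤ K) (hC : 0 ≤ C)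
    (hy_cont : ContinuousOn y (Set.Ici 0))
    (hy_nonneg : ∀ t ≥ (0 : ℝ), 0 ≤ y t)
    (hg_nonneg : ∀ t ≥ (0 : ℝ), 0 ≤ g t)
    (henergy : ∀ ξ τ : ℝ, 0 ≤ ξ → ξ ≤ τ → τ - ξ ≤ 1 →
      y τ + ∫ s in Set.Ioc ξ τ, g s ≤ y ξ + K)
    (hpoincare : ∀ t ≥ (0 : ℝ),
      ∫ s in Set.Ioc t (t + 1), y s ≤ C * ∫ s in Set.Ioc t (t + 1), g s) :
    ∀ t ≥ (0 : ℝ), y t ≤ y 0 + (3 + C) * K := by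
  intro t ht
  have := le_add_one_add_mul_of_energy_poincare hK hC hy_cont (hy_nonneg 0 le_rfl) hg_nonneg
    henergy hpoincare t ht
  linarith

/-- (Abstract uniform-in-time energy estimate.) Let `y : [0,∞) → ℝ` be
continuous and nonnegative, `g : [0,∞) → ℝ` nonnegative and locally integrable, and
`K, C ≥ 0`. Assume (i) the energy inequality `y(τ) + ∫_ξ^τ g ≤ y(ξ) + K` for all
`0 ≤ ξ ≤ τ` with `τ - ξ ≤ 1`, and (ii) the Poincaré-type inequality
`∫_t^{t+1} y ≤ C ∫_t^{t+1} g` for all `t ≥ 0`. Then `y(t) ≤ y(0) + (3 + C) K` for all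
`t ≥ 0`. -/
theorem uniform_energy_bound (y g : ℝ → ℝ) (K C : ℝ) (hK : 0 ≤ K) (hC : 0 ≤ C)
    (hy_cont : ContinuousOn y (Set.Ici 0))
    (hy_nonneg : ∀ t ≥ (0 : ℝ), 0 ≤ y t)
    (hg_nonneg : ∀ t ≥ (0 : ℝ), 0 ≤ g t)
    (hg_loc : LocallyIntegrableOn g (Set.Ici 0))
    (henergy : ∀ ξ τ : ℝ, 0 ≤ ξ → ξ ≤ τ → τ - ξ ≤ 1 →
      y τ + ∫ s in Set.Ioc ξ τ, g s ≤ y ξ + K)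
    (hpoincare : ∀ t ≥ (0 : ℝ),
      ∫ s in Set.Ioc t (t + 1), y s ≤ C * ∫ s in Set.Ioc t (t + 1), g s) :
    ∀ t ≥ (0 : ℝ), y t ≤ y 0 + (3 + C) * K :=
  uniform_energy_bound_general y g K C hK hC hy_cont hy_nonneg hg_nonneg henergy hpoincare
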